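/- Let S be a numerical semigroup that is not symmetric. Then |G₀(S)| ≥ δ(S), and consequently |Star(S)| ≥ δ(S) + 1, where δ(S) = |ℕ \ S|. -/

import Mathlib

/-- A numerical semigroup: a subset of ℕ containing 0, closed under addition,
with finite complement. -/
structure NumSgp where
  carrier : Set ℕ
  zero_mem : 0 ∈ carrier
  add_mem : ∀ a ∈ carrier, ∀ b ∈ carrier, a + b ∈ carrier
  cofinite : carrierᶜ.Finite

/-- The copy of `S` inside ℤ. -/
def natS (S : NumSgp) : Set ℤ := (fun n : ℕ => (n : ℤ)) '' S.carrier

/-- A fractional ideal of `S`: a nonempty subset of ℤ, bounded below, with `I + S ⊆ I`. -/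
def IsFracIdeal (S : NumSgp) (I : Set ℤ) : Prop :=
  I.Nonempty ∧ BddBelow I ∧ ∀ i ∈ I, ∀ s ∈ natS S, i + s ∈ I

/-- `(I − J) = {x ∈ ℤ : x + J ⊆ I}`. -/
def idealSub (I J : Set ℤ) : Set ℤ := {x : ℤ | ∀ j ∈ J, x + j ∈ I}

/-- `F₀(S)`: fractional ideals `I` with `S ⊆ I ⊆ ℕ` (hence with minimal element 0). -/
def F0 (S : NumSgp) : Set (Set ℤ) :=
  {I | IsFracIdeal S I ∧ natS S ⊆ I ∧ I ⊆ {x : ℤ | 0 ≤ x}}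

/-- The `v`-operation (divisorial closure): `I ↦ (S − (S − I))`. -/
def vOp (S : NumSgp) (I : Set ℤ) : Set ℤ := idealSub (natS S) (idealSub (natS S) I)

/-- An ideal is divisorial if it is `v`-closed. -/
def Divisorial (S : NumSgp) (I : Set ℤ) : Prop := vOp S I = I

/-- `G₀(S)`: the nondivisorial ideals in `F₀(S)`. -/
def G0 (S : NumSgp) : Set (Set ℤ) := {I | I ∈ F0 S ∧ ¬ Divisorial S I}

/-- The action of the star operation `⋆_I` generated by `I`:
`J ↦ J^{⋆_I} = J^v ∩ (I − (I − J))`. -/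
def starI (S : NumSgp) (I J : Set ℤ) : Set ℤ := vOp S J ∩ idealSub I (idealSub I J)

/-- The action of the star operation `⋆_Δ = inf_{I ∈ Δ} ⋆_I` generated by a set `Δ` of ideals:
`J ↦ J^{⋆_Δ} = J^v ∩ ⋂_{I ∈ Δ} (I − (I − J))`. -/
def starD (S : NumSgp) (Δ : Set (Set ℤ)) (J : Set ℤ) : Set ℤ :=
  vOp S J ∩ ⋂ I ∈ Δ, idealSub I (idealSub I J)

/-- The ⋆-order: `I ≤⋆ J` iff `I` is `⋆_J`-closed. -/
def starle (S : NumSgp) (I J : Set ℤ) : Prop := starI S J I = I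

/-- A star operation on `S`, given by its action on subsets of ℤ; it is normalized to be
the identity outside the fractional ideals, so that two star operations are equal iff they
agree on all fractional ideals. -/
structure StarOp (S : NumSgp) where
  toFun : Set ℤ → Set ℤ
  isFrac : ∀ I, IsFracIdeal S I → IsFracIdeal S (toFun I)
  subset_star : ∀ I, IsFracIdeal S I → I ⊆ toFun I
  mono : ∀ I J, IsFracIdeal S I → IsFracIdeal S J → I ⊆ J → toFun I ⊆ toFun J
  idem : ∀ I, IsFracIdeal S I → toFun (toFun I) = toFun I
  transl : ∀ I, IsFracIdeal S I → ∀ a : ℤ,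
    toFun ((fun x => a + x) '' I) = (fun x => a + x) '' toFun I
  star_S : toFun (natS S) = natS S
  default_eq : ∀ I, ¬ IsFracIdeal S I → toFun I = I

/-- The order on star operations: `s ≤ t` iff `I^s ⊆ I^t` for every fractional ideal `I`. -/
def StarOp.le {S : NumSgp} (s t : StarOp S) : Prop :=
  ∀ I, IsFracIdeal S I → s.toFun I ⊆ t.toFun I

/-- A star operation `s` is prime if whenever `s ≥ t ∧ u` (the infimum of two star operations
being given by `I ↦ I^t ∩ I^u`), then `s ≥ t` or `s ≥ u`. -/
def StarOp.IsPrime {S : NumSgp} (s : StarOp S) : Prop :=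
  ∀ t u : StarOp S,
    (∀ I, IsFracIdeal S I → t.toFun I ∩ u.toFun I ⊆ s.toFun I) →
    t.le s ∨ u.le s

/-- `I ∈ F₀(S)` is an atom if the star operation `⋆_I` is prime. -/
def AtomIdeal (S : NumSgp) (I : Set ℤ) : Prop :=
  I ∈ F0 S ∧ ∀ t u : StarOp S,
    (∀ J, IsFracIdeal S J → t.toFun J ∩ u.toFun J ⊆ starI S I J) →
    (∀ J, IsFracIdeal S J → t.toFun J ⊆ starI S I J) ∨
    (∀ J, IsFracIdeal S J → u.toFun J ⊆ starI S I J)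

/-- `M_a = {x ∈ ℕ : a − x ∉ S}`, the biggest ideal in `F₀(S)` not containing `a`. -/
def Mdual (S : NumSgp) (a : ℕ) : Set ℤ := {x : ℤ | 0 ≤ x ∧ ((a : ℤ) - x) ∉ natS S}

/-- `Q_a(S) = {I ∈ F₀(S) : a = sup(ℕ \ I), a ∈ I^v}`. -/
def Qa (S : NumSgp) (a : ℕ) : Set (Set ℤ) :=
  {I | I ∈ F0 S ∧ (a : ℤ) ∉ I ∧ (∀ x : ℤ, (a : ℤ) < x → x ∈ I) ∧ (a : ℤ) ∈ vOp S I}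

/-- The number of antichains (with respect to inclusion) of a family of ideals. -/
noncomputable def numInclAnti (Q : Set (Set ℤ)) : ℕ :=
  Set.ncard {Δ : Set (Set ℤ) | Δ ⊆ Q ∧ IsAntichain (· ⊆ ·) Δ}

/-- The `n`-th Dedekind number: the number of antichains of the power set of an
`n`-element set, ordered by inclusion. -/
noncomputable def dedekind (n : ℕ) : ℕ :=
  Nat.card {A : Set (Set (Fin n)) // IsAntichain (· ⊆ ·) A}

/-- `T(S) = (S − M_S) \ S`. -/
def Tset (S : NumSgp) : Set ℤ :=
  idealSub (natS S) ((fun n : ℕ => (n : ℤ)) '' (S.carrier \ {0})) \ natS S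

/-- The type `t(S) = |T(S)|`. -/
noncomputable def typeNum (S : NumSgp) : ℕ := (Tset S).ncard

/-- The Frobenius number `g(S)`: the largest integer not in `S`. -/
noncomputable def frob (S : NumSgp) : ℕ := sSup S.carrierᶜ

/-- The multiplicity `μ(S)`: the smallest nonzero element of `S`. -/
noncomputable def multNum (S : NumSgp) : ℕ := sInf (S.carrier \ {0})

/-- The degree of singularity `δ(S) = |ℕ \ S|`. -/
noncomputable def deltaNum (S : NumSgp) : ℕ := S.carrierᶜ.ncard

/-- `S` is symmetric if `g(S) − a ∈ S` for every `a ∈ ℕ \ S`. -/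
def IsSymmetricSgp (S : NumSgp) : Prop :=
  ∀ a : ℕ, a ∉ S.carrier → ((frob S : ℤ) - (a : ℤ)) ∈ natS S

namespace StarProof

open Set

variable (S : NumSgp)

/-! ### Basic facts about `natS` -/

lemma mem_natS_iff (x : ℤ) : x ∈ natS S ↔ 0 ≤ x ∧ x.toNat ∈ S.carrier := by
  constructor
  · rintro ⟨n, hn, rfl⟩
    exact ⟨Int.ofNat_nonneg n, by simpa using hn⟩
  · rintro ⟨h0, hn⟩
    exact ⟨x.toNat, hn, Int.toNat_of_nonneg h0⟩

lemma natS_nonneg {x : ℤ} (hx : x ∈ natS S) : 0 ≤ x := ((mem_natS_iff S x).1 hx).1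

lemma coe_mem_natS_iff (n : ℕ) : (n : ℤ) ∈ natS S ↔ n ∈ S.carrier := by
  rw [mem_natS_iff]; simp

lemma zero_mem_natS : (0 : ℤ) ∈ natS S := by
  rw [show (0:ℤ) = ((0:ℕ):ℤ) by norm_num, coe_mem_natS_iff]; exact S.zero_mem

lemma natS_add {x y : ℤ} (hx : x ∈ natS S) (hy : y ∈ natS S) : x + y ∈ natS S := by
  rw [mem_natS_iff] at hx hy ⊢
  refine ⟨by linarith [hx.1, hy.1], ?_⟩
  have : (x+y).toNat = x.toNat + y.toNat := by omega
  rw [this]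
  exact S.add_mem _ hx.2 _ hy.2

/-- Every natural number bigger than the Frobenius number is in the semigroup. -/
lemma carrier_of_gt {n : ℕ} (hn : frob S < n) : n ∈ S.carrier := by
  by_contra hc
  have hb : BddAbove S.carrierᶜ := S.cofinite.bddAbove
  exact absurd (le_csSup hb hc) (by exact Nat.not_le.2 hn)

lemma natS_of_gt {x : ℤ} (hx : (frob S : ℤ) < x) : x ∈ natS S := by
  rw [mem_natS_iff]
  have h0 : (0:ℤ) ≤ x := le_trans (Int.ofNat_nonneg _) (le_of_lt hx)
  exact ⟨h0, carrier_of_gt S (by omega)⟩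

/-! ### Galois-type facts about `idealSub` -/

lemma idealSub_anti {A B B' : Set ℤ} (h : B ⊆ B') : idealSub A B' ⊆ idealSub A B :=
  fun _ hx j hj => hx j (h hj)

lemma subset_idealSub_idealSub {A B : Set ℤ} : B ⊆ idealSub A (idealSub A B) := by
  intro b hb t ht
  have := ht b hb
  rwa [add_comm] at this

lemma idealSub_idealSub_idealSub (A B : Set ℤ) :
    idealSub A (idealSub A (idealSub A B)) = idealSub A B := by
  apply Subset.antisymm
  · exact idealSub_anti (subset_idealSub_idealSub)
  · exact subset_idealSub_idealSub

lemma vOp_mono {I J : Set ℤ} (h : I ⊆ J) : vOp S I ⊆ vOp S J :=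
  idealSub_anti (idealSub_anti h)

lemma subset_vOp (I : Set ℤ) : I ⊆ vOp S I := subset_idealSub_idealSub

lemma vOp_vOp (I : Set ℤ) : vOp S (vOp S I) = vOp S I := by
  unfold vOp
  rw [idealSub_idealSub_idealSub]

lemma vOp_natS : vOp S (natS S) = natS S := by
  apply Subset.antisymm
  · intro x hx
    have h0 : (0:ℤ) ∈ idealSub (natS S) (natS S) := by
      intro j hj; simpa using hj
    have := hx 0 h0
    simpa using this
  · exact subset_vOp S _

/-! ### Fractional ideal facts -/

lemma frac_natS : IsFracIdeal S (natS S) :=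
  ⟨⟨0, zero_mem_natS S⟩, ⟨0, fun x hx => natS_nonneg S hx⟩,
   fun i hi s hs => natS_add S hi hs⟩

lemma frac_upper {I : Set ℤ} (hI : IsFracIdeal S I) :
    ∃ N : ℤ, ∀ x : ℤ, N ≤ x → x ∈ I := by
  obtain ⟨a, ha⟩ := hI.1
  refine ⟨a + (frob S : ℤ) + 1, fun x hx => ?_⟩
  have : x = a + (x - a) := by ring
  rw [this]
  exact hI.2.2 a ha _ (natS_of_gt S (by omega))

lemma frac_idealSub {A B : Set ℤ} (hA : IsFracIdeal S A) (hB : IsFracIdeal S B) :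
    IsFracIdeal S (idealSub A B) := by
  obtain ⟨N, hN⟩ := frac_upper S hA
  obtain ⟨m, hm⟩ := hB.2.1
  obtain ⟨b0, hb0⟩ := hB.1
  obtain ⟨mA, hmA⟩ := hA.2.1
  refine ⟨⟨N - m, fun j hj => hN _ (by have := hm hj; omega)⟩,
    ⟨mA - b0, fun x hx => by have := hmA (hx b0 hb0); omega⟩,
    fun i hi s hs j hj => ?_⟩
  have : i + s + j = (i + j) + s := by ring
  rw [this]
  exact hA.2.2 _ (hi j hj) s hs

lemma frac_vOp {I : Set ℤ} (hI : IsFracIdeal S I) : IsFracIdeal S (vOp S I) :=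
  frac_idealSub S (frac_natS S) (frac_idealSub S (frac_natS S) hI)

lemma frac_image_add {I : Set ℤ} (a : ℤ) (hI : IsFracIdeal S I) :
    IsFracIdeal S ((fun x => a + x) '' I) := by
  obtain ⟨⟨i0, hi0⟩, ⟨m, hm⟩, hcl⟩ := hI
  refine ⟨⟨a + i0, ⟨i0, hi0, rfl⟩⟩, ⟨a + m, ?_⟩, ?_⟩
  · rintro x ⟨i, hi, rfl⟩
    have := hm hi
    simp only [mem_lowerBounds] at *
    omega
  · rintro x ⟨i, hi, rfl⟩ s hs
    exact ⟨i + s, hcl i hi s hs, by ring⟩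

lemma image_add_image_neg (a : ℤ) (I : Set ℤ) :
    (fun x => a + x) '' ((fun x => -a + x) '' I) = I := by
  rw [Set.image_image]
  simp

lemma frac_of_image_add {I : Set ℤ} (a : ℤ)
    (hI : IsFracIdeal S ((fun x => a + x) '' I)) : IsFracIdeal S I := by
  have := frac_image_add S (-a) hI
  rwa [Set.image_image, show (fun x => -a + (a + x)) = fun x : ℤ => x by funext x; ring,
    Set.image_id'] at this

/-! ### Translation identities -/

lemma idealSub_image_add (A B : Set ℤ) (a : ℤ) :
    idealSub A ((fun x => a + x) '' B) = (fun x => -a + x) '' (idealSub A B) := by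
  ext x
  constructor
  · intro hx
    refine ⟨x + a, fun j hj => ?_, by ring⟩
    have := hx (a + j) ⟨j, hj, rfl⟩
    rwa [show x + (a + j) = x + a + j by ring] at this
  · rintro ⟨y, hy, rfl⟩ j ⟨b, hb, rfl⟩
    have := hy b hb
    rwa [show -a + y + (a + b) = y + b by ring]

lemma vOp_image_add (J : Set ℤ) (a : ℤ) :
    vOp S ((fun x => a + x) '' J) = (fun x => a + x) '' vOp S J := by
  unfold vOp
  rw [idealSub_image_add, idealSub_image_add, neg_neg]

lemma idealSub_idealSub_image_add (I J : Set ℤ) (a : ℤ) :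
    idealSub I (idealSub I ((fun x => a + x) '' J))
      = (fun x => a + x) '' idealSub I (idealSub I J) := by
  rw [idealSub_image_add, idealSub_image_add, neg_neg]

lemma starI_image_add (I J : Set ℤ) (a : ℤ) :
    starI S I ((fun x => a + x) '' J) = (fun x => a + x) '' starI S I J := by
  unfold starI
  rw [vOp_image_add, idealSub_idealSub_image_add,
    Set.image_inter (add_right_injective a)]

end StarProof

namespace StarProof

variable (S : NumSgp)

/-! ### The ideals `I(a,b)` -/

/-- The ideal `{x ∈ ℕ : (x ∈ S ∨ x ≥ a)} ∩ M_b`. -/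
def Iab (a b : ℤ) : Set ℤ :=
  {x : ℤ | 0 ≤ x ∧ (x ∈ natS S ∨ a ≤ x) ∧ b - x ∉ natS S}

variable {S}

section Iab

variable {a b : ℤ} (ha0 : 0 ≤ a) (haS : a ∉ natS S) (hb0 : 0 ≤ b) (hbS : b ∉ natS S)
  (hba : b - a ∉ natS S)

include hbS in
lemma zero_mem_Iab : (0 : ℤ) ∈ Iab S a b :=
  ⟨le_refl 0, Or.inl (zero_mem_natS S), by rwa [sub_zero]⟩

include ha0 hba in
lemma a_mem_Iab : a ∈ Iab S a b := ⟨ha0, Or.inr (le_refl a), hba⟩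

lemma b_not_mem_Iab : b ∉ Iab S a b := by
  rintro ⟨-, -, hc⟩
  exact hc (by simpa using zero_mem_natS S)

include hbS in
lemma natS_subset_Iab : natS S ⊆ Iab S a b := by
  intro s hs
  refine ⟨natS_nonneg S hs, Or.inl hs, fun hc => hbS ?_⟩
  have := natS_add S hc hs
  simpa using this

include hbS in
lemma Iab_mem_F0 : Iab S a b ∈ F0 S := by
  refine ⟨⟨⟨0, zero_mem_Iab hbS⟩, ⟨0, fun x hx => hx.1⟩, ?_⟩, natS_subset_Iab hbS,
    fun x hx => hx.1⟩
  rintro i ⟨hi0, hi1, hi2⟩ s hs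
  have hs0 := natS_nonneg S hs
  refine ⟨by omega, ?_, fun hc => hi2 ?_⟩
  · rcases hi1 with h | h
    · exact Or.inl (natS_add S h hs)
    · exact Or.inr (by omega)
  · have := natS_add S hc hs
    rwa [show b - (i + s) + s = b - i by ring] at this

-- facts about `t ∈ (S - I(a,b))`
include hbS in
lemma t_mem_natS {t : ℤ} (ht : t ∈ idealSub (natS S) (Iab S a b)) : t ∈ natS S := by
  have := ht 0 (zero_mem_Iab hbS)
  simpa using this

include ha0 haS hbS hba in
lemma t_pos {t : ℤ} (ht : t ∈ idealSub (natS S) (Iab S a b)) : 1 ≤ t := by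
  have h1 := natS_nonneg S (t_mem_natS hbS ht)
  rcases eq_or_lt_of_le h1 with h | h
  · exfalso
    have := ht a (a_mem_Iab ha0 hba)
    rw [← h] at this
    exact haS (by simpa using this)
  · omega

include ha0 haS hbS hba in
/-- The key step: if `a < b ≤ g` and `t ∈ S - I(a,b)` with `t + b ∉ S`, then `t = g - b`. -/
lemma key_step (hgS : (frob S : ℤ) ∉ natS S) (hab : a < b) {t : ℤ}
    (ht : t ∈ idealSub (natS S) (Iab S a b)) (htb : t + b ∉ natS S) :
    t = (frob S : ℤ) - b := by
  set g : ℤ := (frob S : ℤ) with hg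
  have ht1 : 1 ≤ t := t_pos ha0 haS hbS hba ht
  have htbg : t + b ≤ g := by
    by_contra hc
    exact htb (natS_of_gt S (by omega))
  by_contra hne
  have hx : g - t ∈ Iab S a b := by
    refine ⟨by omega, Or.inr (by omega), fun hc => ?_⟩
    have := natS_nonneg S hc
    omega
  have := ht _ hx
  rw [show t + (g - t) = g by ring] at this
  exact hgS this

end Iab

/-! ### The maximal asymmetry witness `c` -/

lemma compl_nonempty (h : ¬ IsSymmetricSgp S) : S.carrierᶜ.Nonempty := by
  by_contra hc
  rw [Set.not_nonempty_iff_eq_empty] at hc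
  exact h (fun a ha => (Set.eq_empty_iff_forall_notMem.1 hc a ha).elim)

lemma frob_not_mem (h : ¬ IsSymmetricSgp S) : frob S ∉ S.carrier :=
  Nat.sSup_mem (compl_nonempty h) S.cofinite.bddAbove

lemma frob_not_natS (h : ¬ IsSymmetricSgp S) : (frob S : ℤ) ∉ natS S := by
  rw [coe_mem_natS_iff]
  exact frob_not_mem h

lemma exists_c (h : ¬ IsSymmetricSgp S) :
    ∃ c : ℤ, (0 ≤ c ∧ c ∉ natS S ∧ (frob S : ℤ) - c ∉ natS S) ∧
      ∀ z : ℤ, (0 ≤ z ∧ z ∉ natS S ∧ (frob S : ℤ) - z ∉ natS S) → z ≤ c := by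
  apply Int.exists_greatest_of_bdd
  · refine ⟨(frob S : ℤ), fun z hz => ?_⟩
    by_contra hc
    exact hz.2.1 (natS_of_gt S (by omega))
  · rw [IsSymmetricSgp] at h
    push_neg at h
    obtain ⟨n, hn, hn2⟩ := h
    exact ⟨(n : ℤ), Int.ofNat_nonneg n, by rwa [coe_mem_natS_iff], hn2⟩

/-- The main existence result: every gap `a` admits a nondivisorial ideal in `F₀`
whose minimal non-semigroup element is `a`. -/
lemma exists_nondiv (h : ¬ IsSymmetricSgp S) (a : ℕ) (ha : a ∉ S.carrier) :
    ∃ I : Set ℤ, I ∈ G0 S ∧ (a : ℤ) ∈ I ∧ ∀ x ∈ I, x ∉ natS S → (a : ℤ) ≤ x := by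
  set g : ℤ := (frob S : ℤ) with hg
  have hgS : g ∉ natS S := frob_not_natS h
  have haS : (a : ℤ) ∉ natS S := by rwa [coe_mem_natS_iff]
  have ha0 : (0:ℤ) ≤ (a:ℤ) := Int.ofNat_nonneg a
  have hag : (a : ℤ) ≤ g := by
    by_contra hc
    exact haS (natS_of_gt S (by omega))
  obtain ⟨c, ⟨hc0, hcS, hcgS⟩, hmax⟩ := exists_c h
  have hcg : c < g := by
    have hle : c ≤ g := by
      by_contra hc'
      exact hcS (natS_of_gt S (by omega))
    rcases eq_or_lt_of_le hle with h' | h'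
    · exfalso; apply hcgS; rw [h', sub_self]; exact zero_mem_natS S
    · exact h'
  have hPF : ∀ t ∈ natS S, t ≠ 0 → c + t ∈ natS S := by
    intro t htS htne
    by_contra hct
    have ht0 := natS_nonneg S htS
    have h1 : g - (c + t) ∈ natS S := by
      by_contra hc'
      have := hmax (c + t) ⟨by omega, hct, hc'⟩
      omega
    have := natS_add S h1 htS
    rw [show g - (c + t) + t = g - c by ring] at this
    exact hcgS this
  -- now the case analysis on the position of `a`
  -- in every case we produce `b` with `b ∈ vOp (Iab)`
  have main : ∃ b : ℤ, 0 ≤ b ∧ b ∉ natS S ∧ b - (a:ℤ) ∉ natS S ∧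
      ∀ t ∈ idealSub (natS S) (Iab S (a:ℤ) b), t + b ∈ natS S := by
    rcases lt_or_ge c (a:ℤ) with hca | hac
    · -- Case A : b = c, using that c is pseudo-Frobenius
      refine ⟨c, hc0, hcS, by_contra fun hc' => ?_, fun t ht => ?_⟩
      · have := natS_nonneg S (not_not.1 hc')
        omega
      · have hba : c - (a:ℤ) ∉ natS S := fun hc' => by have := natS_nonneg S hc'; omega
        have htS := t_mem_natS hcS ht
        have ht1 := t_pos ha0 haS hcS hba ht
        have := hPF t htS (by omega)
        rwa [add_comm] at this
    · rcases em ((g - (a:ℤ)) ∈ natS S) with hga | hga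
      · -- g - a ∈ S : here a < c
        have hac' : (a : ℤ) < c := by
          rcases eq_or_lt_of_le hac with h' | h'
          · exfalso; rw [h'] at hga; exact hcgS hga
          · exact h'
        rcases em ((c - (a:ℤ)) ∈ natS S) with hcaS | hcaS
        · -- Case C2b : b = a + (g - c)
          refine ⟨(a:ℤ) + (g - c), by omega, fun hc' => ?_, ?_, fun t ht => ?_⟩
          · have := natS_add S hc' hcaS
            rw [show (a:ℤ) + (g - c) + (c - a) = g by ring] at this
            exact hgS this
          · rw [show (a:ℤ) + (g - c) - (a:ℤ) = g - c by ring]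
            exact hcgS
          · set b : ℤ := (a:ℤ) + (g - c) with hbdef
            have hbS : b ∉ natS S := fun hc' => by
              have := natS_add S hc' hcaS
              rw [show b + (c - a) = g by rw [hbdef]; ring] at this
              exact hgS this
            have hba : b - (a:ℤ) ∉ natS S := by
              rw [show b - (a:ℤ) = g - c by rw [hbdef]; ring]
              exact hcgS
            by_contra htb
            have := key_step ha0 haS hbS hba hgS (by omega) ht htb
            have hta := ht (a:ℤ) (a_mem_Iab ha0 hba)
            rw [this, show g - b + (a:ℤ) = c by rw [hbdef]; ring] at hta
            exact hcS hta
        · -- Case C2a : b = c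
          refine ⟨c, hc0, hcS, hcaS, fun t ht => ?_⟩
          by_contra htb
          have := key_step ha0 haS hcS hcaS hgS hac' ht htb
          have htS := t_mem_natS hcS ht
          rw [this] at htS
          exact hcgS htS
      · -- Case C1 : b = g
        refine ⟨g, by omega, hgS, hga, fun t ht => ?_⟩
        have ht1 := t_pos ha0 haS hgS hga ht
        exact natS_of_gt S (by omega)
  obtain ⟨b, hb0, hbS, hba, hvb⟩ := main
  refine ⟨Iab S (a:ℤ) b, ⟨Iab_mem_F0 hbS, fun hdiv => ?_⟩, a_mem_Iab ha0 hba,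
    fun x hx hxS => ?_⟩
  · -- b ∈ vOp \ I contradicts divisoriality
    have hbv : b ∈ vOp S (Iab S (a:ℤ) b) := by
      intro t ht
      rw [add_comm]
      exact hvb t ht
    rw [Divisorial] at hdiv
    rw [hdiv] at hbv
    exact b_not_mem_Iab hbv
  · rcases hx.2.1 with h' | h'
    · exact absurd h' hxS
    · exact h'

end StarProof

namespace StarProof

open Set

variable (S : NumSgp)

/-! ### `ℕ` as an ideal, and `v`-closure staying inside it -/

lemma idealSub_natS_Nset (hgS : (frob S : ℤ) ∉ natS S) :
    idealSub (natS S) {x : ℤ | 0 ≤ x} = {t : ℤ | (frob S : ℤ) < t} := by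
  ext t
  constructor
  · intro ht
    by_contra hc
    have h0 : (0:ℤ) ≤ (frob S : ℤ) - t := by
      simp only [mem_setOf_eq, not_lt] at hc
      omega
    have := ht _ h0
    rw [show t + ((frob S : ℤ) - t) = (frob S : ℤ) by ring] at this
    exact hgS this
  · intro ht j hj
    exact natS_of_gt S (by simp only [mem_setOf_eq] at ht hj ⊢; omega)

lemma vOp_Nset (hgS : (frob S : ℤ) ∉ natS S) :
    vOp S {x : ℤ | 0 ≤ x} = {x : ℤ | 0 ≤ x} := by
  unfold vOp
  rw [idealSub_natS_Nset S hgS]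
  ext x
  constructor
  · intro hx
    by_contra hc
    have := hx ((frob S : ℤ) - x) (by simp only [mem_setOf_eq] at hc ⊢; omega)
    rw [show x + ((frob S : ℤ) - x) = (frob S : ℤ) by ring] at this
    exact hgS this
  · intro hx j hj
    exact natS_of_gt S (by simp only [mem_setOf_eq] at hx hj ⊢; omega)

lemma vOp_subset_Nset (hgS : (frob S : ℤ) ∉ natS S) {I : Set ℤ}
    (hI : I ⊆ {x : ℤ | 0 ≤ x}) : vOp S I ⊆ {x : ℤ | 0 ≤ x} := by
  rw [← vOp_Nset S hgS]
  exact vOp_mono S hI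

/-! ### Basic properties of `starI` -/

variable {S}

lemma subset_starI (I₀ J : Set ℤ) : J ⊆ starI S I₀ J :=
  subset_inter (subset_vOp S J) subset_idealSub_idealSub

lemma idealSub_self_self (I : Set ℤ) : idealSub I (idealSub I I) = I := by
  apply Subset.antisymm
  · intro x hx
    have h0 : (0:ℤ) ∈ idealSub I I := fun j hj => by simpa using hj
    have := hx 0 h0
    simpa using this
  · exact subset_idealSub_idealSub

lemma starI_self (I : Set ℤ) : starI S I I = I := by
  unfold starI
  rw [idealSub_self_self]
  exact inter_eq_self_of_subset_right (subset_vOp S I)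

lemma idealSub_closed {A B : Set ℤ} (hA : ∀ i ∈ A, ∀ s ∈ natS S, i + s ∈ A)
    {x s : ℤ} (hx : x ∈ idealSub A B) (hs : s ∈ natS S) : x + s ∈ idealSub A B := by
  intro j hj
  rw [show x + s + j = (x + j) + s by ring]
  exact hA _ (hx j hj) s hs

lemma frac_starI {I₀ J : Set ℤ} (hI₀ : IsFracIdeal S I₀) (hJ : IsFracIdeal S J) :
    IsFracIdeal S (starI S I₀ J) := by
  obtain ⟨j0, hj0⟩ := hJ.1
  refine ⟨⟨j0, subset_starI I₀ J hj0⟩,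
    BddBelow.mono (inter_subset_left) (frac_vOp S hJ).2.1, ?_⟩
  rintro i ⟨hi1, hi2⟩ s hs
  exact ⟨idealSub_closed (fun a ha t ht => natS_add S ha ht) hi1 hs,
    idealSub_closed hI₀.2.2 hi2 hs⟩

lemma starI_natS (I₀ : Set ℤ) : starI S I₀ (natS S) = natS S := by
  unfold starI
  rw [vOp_natS]
  exact inter_eq_self_of_subset_left subset_idealSub_idealSub

lemma starI_mono (I₀ : Set ℤ) {J K : Set ℤ} (h : J ⊆ K) :
    starI S I₀ J ⊆ starI S I₀ K :=
  inter_subset_inter (vOp_mono S h) (idealSub_anti (idealSub_anti h))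

lemma starI_idem (I₀ J : Set ℤ) : starI S I₀ (starI S I₀ J) = starI S I₀ J := by
  apply Subset.antisymm
  · intro x hx
    constructor
    · have h1 : vOp S (starI S I₀ J) ⊆ vOp S J := by
        have := vOp_mono S (inter_subset_left : starI S I₀ J ⊆ vOp S J)
        rwa [vOp_vOp] at this
      exact h1 hx.1
    · have h2 : idealSub I₀ (starI S I₀ J) ⊇ idealSub I₀ J := by
        have := idealSub_anti (A := I₀)
          (inter_subset_right : starI S I₀ J ⊆ idealSub I₀ (idealSub I₀ J))
        rwa [idealSub_idealSub_idealSub] at this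
      exact idealSub_anti h2 hx.2
  · exact subset_starI I₀ _

/-! ### The star operations `⋆_I` and `v` -/

open scoped Classical in
/-- The star operation generated by a fractional ideal `I₀`. -/
noncomputable def starOpOf (I₀ : Set ℤ) (hI₀ : IsFracIdeal S I₀) : StarOp S where
  toFun J := if IsFracIdeal S J then starI S I₀ J else J
  isFrac J hJ := by simp only [if_pos hJ]; exact frac_starI hI₀ hJ
  subset_star J hJ := by simp only [if_pos hJ]; exact subset_starI I₀ J
  mono J K hJ hK hJK := by simp only [if_pos hJ, if_pos hK]; exact starI_mono I₀ hJK
  idem J hJ := by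
    simp only [if_pos hJ, if_pos (frac_starI hI₀ hJ), starI_idem]
  transl J hJ a := by
    simp only [if_pos hJ, if_pos (frac_image_add S a hJ), starI_image_add]
  star_S := by simp only [if_pos (frac_natS S), starI_natS]
  default_eq J hJ := if_neg hJ

open scoped Classical in
/-- The `v`-operation as a star operation. -/
noncomputable def vStarOp : StarOp S where
  toFun J := if IsFracIdeal S J then vOp S J else J
  isFrac J hJ := by simp only [if_pos hJ]; exact frac_vOp S hJ
  subset_star J hJ := by simp only [if_pos hJ]; exact subset_vOp S J
  mono J K hJ hK hJK := by simp only [if_pos hJ, if_pos hK]; exact vOp_mono S hJK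
  idem J hJ := by simp only [if_pos hJ, if_pos (frac_vOp S hJ), vOp_vOp]
  transl J hJ a := by simp only [if_pos hJ, if_pos (frac_image_add S a hJ), vOp_image_add]
  star_S := by simp only [if_pos (frac_natS S), vOp_natS]
  default_eq J hJ := if_neg hJ

lemma starOpOf_apply_frac (I₀ : Set ℤ) (hI₀ : IsFracIdeal S I₀) {J : Set ℤ}
    (hJ : IsFracIdeal S J) : (starOpOf I₀ hI₀).toFun J = starI S I₀ J := by
  simp only [starOpOf]
  rw [if_pos hJ]

lemma vStarOp_apply_frac {J : Set ℤ} (hJ : IsFracIdeal S J) :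
    (vStarOp (S := S)).toFun J = vOp S J := by
  simp only [vStarOp]
  rw [if_pos hJ]

/-! ### Any star operation is below `v`, and preserves `F₀` -/

lemma star_subset_vOp (s : StarOp S) {I : Set ℤ} (hI : IsFracIdeal S I) :
    s.toFun I ⊆ vOp S I := by
  intro x hx u hu
  have hIA : I ⊆ (fun y => -u + y) '' natS S := fun i hi => ⟨u + i, hu i hi, by ring⟩
  have hA : IsFracIdeal S ((fun y => -u + y) '' natS S) :=
    frac_image_add S (-u) (frac_natS S)
  have hx2 := s.mono I _ hI hA hIA hx
  rw [s.transl (natS S) (frac_natS S) (-u), s.star_S] at hx2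
  obtain ⟨σ, hσ, he⟩ := hx2
  simp only at he
  rwa [show σ = x + u by omega] at hσ

lemma starOp_mem_F0 (hgS : (frob S : ℤ) ∉ natS S) (s : StarOp S) {I : Set ℤ}
    (hI : I ∈ F0 S) : s.toFun I ∈ F0 S :=
  ⟨s.isFrac I hI.1, hI.2.1.trans (s.subset_star I hI.1),
    (star_subset_vOp s hI.1).trans (vOp_subset_Nset S hgS hI.2.2)⟩

/-! ### Finiteness -/

lemma F0_finite : (F0 S).Finite := by
  have hG : ((fun n : ℕ => (n : ℤ)) '' S.carrierᶜ).Finite := S.cofinite.image _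
  apply Set.Finite.subset (Set.Finite.image (fun T => natS S ∪ T) hG.finite_subsets)
  intro I hI
  refine ⟨I ∩ ((fun n : ℕ => (n : ℤ)) '' S.carrierᶜ), fun x hx => hx.2, ?_⟩
  apply Subset.antisymm
  · exact union_subset hI.2.1 (fun x hx => hx.1)
  · intro x hx
    have h0 : (0:ℤ) ≤ x := hI.2.2 hx
    by_cases hc : x.toNat ∈ S.carrier
    · exact Or.inl ((mem_natS_iff S x).2 ⟨h0, hc⟩)
    · exact Or.inr ⟨hx, x.toNat, hc, Int.toNat_of_nonneg h0⟩

lemma starOp_ext {s t : StarOp S} (h : ∀ I, s.toFun I = t.toFun I) : s = t := by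
  cases s; cases t
  simp only [StarOp.mk.injEq]
  exact funext h

lemma starOp_ext_F0 {s t : StarOp S} (h : ∀ I ∈ F0 S, s.toFun I = t.toFun I) : s = t := by
  apply starOp_ext
  intro I
  by_cases hI : IsFracIdeal S I
  · obtain ⟨lb, hlb⟩ := hI.2.1
    obtain ⟨m, hm, hmin⟩ := Int.exists_least_of_bdd (P := (· ∈ I))
      ⟨lb, fun z hz => hlb hz⟩ hI.1
    set I' := (fun x => -m + x) '' I with hI'
    have hI'F0 : I' ∈ F0 S := by
      refine ⟨frac_image_add S (-m) hI, ?_, ?_⟩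
      · intro n hn
        exact ⟨m + n, hI.2.2 m hm n hn, by ring⟩
      · rintro x ⟨i, hi, rfl⟩
        have := hmin i hi
        simp only [mem_setOf_eq]
        omega
    have hrec : I = (fun x => m + x) '' I' := (image_add_image_neg m I).symm
    rw [hrec, s.transl I' hI'F0.1 m, t.transl I' hI'F0.1 m, h I' hI'F0]
  · rw [s.default_eq I hI, t.default_eq I hI]

lemma starOp_finite (hgS : (frob S : ℤ) ∉ natS S) : Finite (StarOp S) := by
  have h1 : Finite {I // I ∈ F0 S} := (F0_finite (S := S)).to_subtype
  apply Finite.of_injective (fun s : StarOp S =>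
    (fun I : {I // I ∈ F0 S} => (⟨s.toFun I.1, starOp_mem_F0 hgS s I.2⟩ : {I // I ∈ F0 S})))
  intro s t hst
  apply starOp_ext_F0
  intro I hI
  simpa using congrFun hst ⟨I, hI⟩

end StarProof

namespace StarProof

open Set

variable {S : NumSgp}

lemma mem_starI_iff {I₀ J : Set ℤ} {x : ℤ} :
    x ∈ starI S I₀ J ↔ x ∈ vOp S J ∧ x ∈ idealSub I₀ (idealSub I₀ J) := Iff.rfl

lemma starOpOf_ne_vStar {I : Set ℤ} (hI : I ∈ F0 S) (hIv : ¬ Divisorial S I) :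
    starOpOf I hI.1 ≠ vStarOp := by
  intro he
  have h2 := congrArg (fun s : StarOp S => s.toFun I) he
  rw [starOpOf_apply_frac I hI.1 hI.1, vStarOp_apply_frac hI.1, starI_self] at h2
  exact hIv h2.symm

lemma starOpOf_inj {I J : Set ℤ} (hI : I ∈ F0 S) (hJ : J ∈ F0 S)
    (hIv : ¬ Divisorial S I) (heq : starOpOf I hI.1 = starOpOf J hJ.1) : I = J := by
  have e1 : starI S J I = I := by
    have h2 := congrArg (fun s : StarOp S => s.toFun I) heq
    rw [starOpOf_apply_frac I hI.1 hI.1, starOpOf_apply_frac J hJ.1 hI.1,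
      starI_self] at h2
    exact h2.symm
  have e2 : starI S I J = J := by
    have h2 := congrArg (fun s : StarOp S => s.toFun J) heq
    rw [starOpOf_apply_frac I hI.1 hJ.1, starOpOf_apply_frac J hJ.1 hJ.1,
      starI_self] at h2
    exact h2
  by_contra hne
  have hne' : (vOp S I \ I).Nonempty :=
    Set.diff_nonempty.2 (fun hc => hIv (Subset.antisymm hc (subset_vOp S I)))
  have hbd : ∀ z : ℤ, z ∈ vOp S I \ I → z ≤ (frob S : ℤ) := by
    intro z hz
    by_contra hc
    exact hz.2 (hI.2.1 (natS_of_gt S (by omega)))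
  obtain ⟨α, hα, hαmax⟩ := Int.exists_greatest_of_bdd (P := fun x => x ∈ vOp S I \ I)
    ⟨(frob S : ℤ), hbd⟩ hne'
  -- the step: from any element of `vOp I \ I` produce a strictly bigger one
  have step : ∀ x ∈ vOp S I \ I, ∃ y ∈ vOp S I \ I, x + 1 ≤ y := by
    intro x hx
    have hx1 : x ∉ idealSub J (idealSub J I) := by
      intro hc
      exact hx.2 (by rw [← e1]; exact ⟨hx.1, hc⟩)
    rw [idealSub, mem_setOf_eq] at hx1
    push_neg at hx1
    obtain ⟨u, hu, hxu⟩ := hx1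
    have hxuv : x + u ∈ vOp S J := by
      intro t ht
      have hut : u + t ∈ idealSub (natS S) I := by
        intro i hi
        have := ht (u + i) (hu i hi)
        rwa [show t + (u + i) = u + t + i by ring] at this
      have := hx.1 _ hut
      rwa [show x + (u + t) = x + u + t by ring] at this
    have hx2 : x + u ∉ idealSub I (idealSub I J) := by
      intro hc
      exact hxu (by rw [← e2]; exact ⟨hxuv, hc⟩)
    rw [idealSub, mem_setOf_eq] at hx2
    push_neg at hx2
    obtain ⟨w, hw, hxw⟩ := hx2
    have hxwv : x + u + w ∈ vOp S I := by
      intro t ht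
      have hwt : w + t ∈ idealSub (natS S) J := by
        intro j hj
        have := ht (w + j) (hw j hj)
        rwa [show t + (w + j) = w + t + j by ring] at this
      have := hxuv _ hwt
      rwa [show x + u + (w + t) = x + u + w + t by ring] at this
    have hwI : w ∈ I := by
      have := hw 0 (hJ.2.1 (zero_mem_natS S))
      simpa using this
    have huwJ : u + w ∈ J := hu w hwI
    have huw0 : (0:ℤ) ≤ u + w := hJ.2.2 huwJ
    rcases eq_or_lt_of_le huw0 with h0 | h0
    · -- u + w = 0 forces I = J, contradiction
      exfalso
      apply hne
      have hJI : J = (fun y => u + y) '' I := by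
        apply Subset.antisymm
        · intro j hj
          exact ⟨w + j, hw j hj, by simp only []; omega⟩
        · rintro _ ⟨i, hi, rfl⟩
          exact hu i hi
      have hu0 : u = 0 := by
        have h0J : (0:ℤ) ∈ J := hJ.2.1 (zero_mem_natS S)
        rw [hJI] at h0J
        obtain ⟨i, hi, he⟩ := h0J
        have hi0 : (0:ℤ) ≤ i := hI.2.2 hi
        have h0I : (0:ℤ) ∈ I := hI.2.1 (zero_mem_natS S)
        have huJ : u ∈ J := by
          rw [hJI]; exact ⟨0, h0I, by simp⟩
        have hu0' : (0:ℤ) ≤ u := hJ.2.2 huJ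
        simp only at he
        omega
      rw [hJI, hu0]
      simp
    · refine ⟨x + (u + w), ⟨?_, fun hc => hxw ?_⟩, by omega⟩
      · rwa [show x + (u + w) = x + u + w by ring]
      · rwa [show x + (u + w) = x + u + w by ring] at hc
  obtain ⟨y, hy, hy'⟩ := step α hα
  have := hαmax y hy
  omega

end StarProof

theorem card_star_ge_delta_aux (S : NumSgp) (h : ¬ IsSymmetricSgp S) :
    deltaNum S ≤ (G0 S).ncard ∧ deltaNum S + 1 ≤ Nat.card (StarOp S) := by
  classical
  open StarProof in
  have hgS : (frob S : ℤ) ∉ natS S := StarProof.frob_not_natS h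
  have hex : ∀ a : ℕ, a ∈ S.carrierᶜ →
      ∃ I : Set ℤ, I ∈ G0 S ∧ (a : ℤ) ∈ I ∧ ∀ x ∈ I, x ∉ natS S → (a : ℤ) ≤ x :=
    fun a ha => StarProof.exists_nondiv h a ha
  choose! φ hφ using hex
  have hmemG0 : ∀ a ∈ S.carrierᶜ, φ a ∈ G0 S := fun a ha => (hφ a ha).1
  have hinj : Set.InjOn φ S.carrierᶜ := by
    intro a ha a' ha' hee
    have h1 : (a : ℤ) ∈ φ a' := hee ▸ (hφ a ha).2.1
    have h2 : (a' : ℤ) ∈ φ a := hee ▸ (hφ a' ha').2.1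
    have hanS : (a : ℤ) ∉ natS S := by rwa [StarProof.coe_mem_natS_iff]
    have hanS' : (a' : ℤ) ∉ natS S := by rwa [StarProof.coe_mem_natS_iff]
    have l1 := (hφ a' ha').2.2 _ h1 hanS
    have l2 := (hφ a ha).2.2 _ h2 hanS'
    omega
  have hG0fin : (G0 S).Finite := (StarProof.F0_finite (S := S)).subset (fun I hI => hI.1)
  have hcompl_fin : S.carrierᶜ.Finite := S.cofinite
  constructor
  · have himg : φ '' S.carrierᶜ ⊆ G0 S := by
      rintro _ ⟨a, ha, rfl⟩; exact hmemG0 a ha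
    calc deltaNum S = (φ '' S.carrierᶜ).ncard := by
          rw [Set.ncard_image_of_injOn hinj]; rfl
    _ ≤ (G0 S).ncard := Set.ncard_le_ncard himg hG0fin
  · have hFin : Finite (StarOp S) := StarProof.starOp_finite hgS
    set G : ℕ → StarOp S := fun a =>
      if ha : a ∈ S.carrierᶜ then StarProof.starOpOf (φ a) (hmemG0 a ha).1.1
      else StarProof.vStarOp
    have hGinj : Set.InjOn G S.carrierᶜ := by
      intro a ha a' ha' hee
      simp only [G, dif_pos ha, dif_pos ha'] at hee
      exact hinj ha ha'
        (StarProof.starOpOf_inj (hmemG0 a ha).1 (hmemG0 a' ha').1 (hmemG0 a ha).2 hee)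
    have hnotmem : StarProof.vStarOp ∉ G '' S.carrierᶜ := by
      rintro ⟨a, ha, hee⟩
      simp only [G, dif_pos ha] at hee
      exact StarProof.starOpOf_ne_vStar (hmemG0 a ha).1 (hmemG0 a ha).2 hee
    have hTcard : (insert StarProof.vStarOp (G '' S.carrierᶜ)).ncard = deltaNum S + 1 := by
      rw [Set.ncard_insert_of_notMem hnotmem (hcompl_fin.image _),
        Set.ncard_image_of_injOn hGinj]
      rfl
    calc deltaNum S + 1 = (insert StarProof.vStarOp (G '' S.carrierᶜ)).ncard := hTcard.symm
    _ ≤ (Set.univ : Set (StarOp S)).ncard :=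
        Set.ncard_le_ncard (Set.subset_univ _) Set.finite_univ
    _ = Nat.card (StarOp S) := Set.ncard_univ _

/-- For a nonsymmetric numerical semigroup, `|G₀(S)| ≥ δ(S)` and hence
`|Star(S)| ≥ δ(S) + 1`. -/
theorem card_star_ge_delta (S : NumSgp) (h : ¬ IsSymmetricSgp S) :
    deltaNum S ≤ (G0 S).ncard ∧ deltaNum S + 1 ≤ Nat.card (StarOp S) :=
  card_star_ge_delta_aux S h
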